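/- arXiv:2208.12647 — 2 statements merged into one kernel-verified Lean document; each statement's English description precedes it below -/
import Mathlib

section
/- Let (g,[·,·,·],{·,·,·}) be a compatible 3-Lie algebra, (V;ρ,μ) a representation, and (ω₁,ω₂), (ω₁',ω₂') two 2-cocycles. Then the abelian extensions g ⊕_{ρ,μ,ω₁,ω₂} V and g ⊕_{ρ,μ,ω₁',ω₂'} V are isomorphic (via an isomorphism restricting to the identity on V and inducing the identity on g) if and only if there exists a linear map τ: g → V with ω₁(x,y,z) − ω₁'(x,y,z) = ρ(x,y)τ(z) + ρ(y,z)τ(x) + ρ(z,x)τ(y) − τ([x,y,z]) and ω₂(x,y,z) − ω₂'(x,y,z) = μ(x,y)τ(z) + μ(y,z)τ(x) + μ(z,x)τ(y) − τ({x,y,z}). -/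
section Defs

/-- A map `G × G × G → H` is trilinear if it is linear in each argument. -/
def IsTrilinearMap (K : Type*) {G H : Type*} [Field K] [AddCommGroup G] [Module K G]
    [AddCommGroup H] [Module K H] (b : G → G → G → H) : Prop :=
  (∀ y z, IsLinearMap K (fun x => b x y z)) ∧
  (∀ x z, IsLinearMap K (fun y => b x y z)) ∧
  (∀ x y, IsLinearMap K (fun z => b x y z))

/-- Skew-symmetry of a ternary bracket. -/
def IsSkewSym {G H : Type*} [AddCommGroup G] [AddCommGroup H] (b : G → G → G → H) : Prop :=
  (∀ x y z, b x y z = - b y x z) ∧ (∀ x y z, b x y z = - b x z y)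

/-- The Fundamental Identity of a 3-Lie algebra. -/
def FundIdent {G : Type*} [AddCommGroup G] (b : G → G → G → G) : Prop :=
  ∀ x₁ x₂ x₃ x₄ x₅, b x₁ x₂ (b x₃ x₄ x₅) =
    b (b x₁ x₂ x₃) x₄ x₅ + b x₃ (b x₁ x₂ x₄) x₅ + b x₃ x₄ (b x₁ x₂ x₅)

/-- A 3-Lie algebra structure: a skew-symmetric trilinear bracket satisfying
the Fundamental Identity. -/
def Is3Lie (K : Type*) {G : Type*} [Field K] [AddCommGroup G] [Module K G]
    (b : G → G → G → G) : Prop :=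
  IsTrilinearMap K b ∧ IsSkewSym b ∧ FundIdent b

/-- The compatibility condition (2.4) between two ternary brackets. -/
def Compat {G : Type*} [AddCommGroup G] (b₁ b₂ : G → G → G → G) : Prop :=
  ∀ x₁ x₂ x₃ x₄ x₅,
    b₁ x₁ x₂ (b₂ x₃ x₄ x₅) + b₂ x₁ x₂ (b₁ x₃ x₄ x₅) =
    b₁ (b₂ x₁ x₂ x₃) x₄ x₅ + b₂ (b₁ x₁ x₂ x₃) x₄ x₅
    + b₁ x₃ (b₂ x₁ x₂ x₄) x₅ + b₂ x₃ (b₁ x₁ x₂ x₄) x₅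
    + b₁ x₃ x₄ (b₂ x₁ x₂ x₅) + b₂ x₃ x₄ (b₁ x₁ x₂ x₅)

/-- The linear combination `k₁ • b₁ + k₂ • b₂` of two ternary brackets. -/
def combBracket {K G : Type*} [Field K] [AddCommGroup G] [Module K G]
    (k₁ k₂ : K) (b₁ b₂ : G → G → G → G) : G → G → G → G :=
  fun x y z => k₁ • b₁ x y z + k₂ • b₂ x y z

/-- Nijenhuis operator condition for a ternary bracket. -/
def IsNijenhuis {K G : Type*} [Field K] [AddCommGroup G] [Module K G]
    (b : G → G → G → G) (N : G →ₗ[K] G) : Prop :=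
  ∀ x y z, b (N x) (N y) (N z) =
    N (b (N x) (N y) z + b x (N y) (N z) + b (N x) y (N z)
      - N (b (N x) y z) - N (b x (N y) z) - N (b x y (N z)) + N (N (b x y z)))

/-- The deformed bracket `[·,·,·]_N` associated to a linear map `N`. -/
def deformedBracket {K G : Type*} [Field K] [AddCommGroup G] [Module K G]
    (b : G → G → G → G) (N : G →ₗ[K] G) : G → G → G → G :=
  fun x y z =>
    b (N x) (N y) z + b x (N y) (N z) + b (N x) y (N z)
      - N (b (N x) y z) - N (b x (N y) z) - N (b x y (N z)) + N (N (b x y z))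

/-- The mixed (degree one) compatibility/cocycle condition between two brackets
`b₁, b₂` and two 2-cochains `w₁, w₂`: the sum of the mixed versions of the
compatibility condition. -/
def MixedCocycleCond {G : Type*} [AddCommGroup G]
    (b₁ b₂ w₁ w₂ : G → G → G → G) : Prop :=
  ∀ x₁ x₂ x₃ x₄ x₅,
    b₁ x₁ x₂ (w₂ x₃ x₄ x₅) + w₂ x₁ x₂ (b₁ x₃ x₄ x₅)
    + b₂ x₁ x₂ (w₁ x₃ x₄ x₅) + w₁ x₁ x₂ (b₂ x₃ x₄ x₅) =
    b₁ (w₂ x₁ x₂ x₃) x₄ x₅ + w₂ (b₁ x₁ x₂ x₃) x₄ x₅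
    + b₂ (w₁ x₁ x₂ x₃) x₄ x₅ + w₁ (b₂ x₁ x₂ x₃) x₄ x₅
    + b₁ x₃ (w₂ x₁ x₂ x₄) x₅ + w₂ x₃ (b₁ x₁ x₂ x₄) x₅
    + b₂ x₃ (w₁ x₁ x₂ x₄) x₅ + w₁ x₃ (b₂ x₁ x₂ x₄) x₅
    + b₁ x₃ x₄ (w₂ x₁ x₂ x₅) + w₂ x₃ x₄ (b₁ x₁ x₂ x₅)
    + b₂ x₃ x₄ (w₁ x₁ x₂ x₅) + w₁ x₃ x₄ (b₂ x₁ x₂ x₅)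

/-- `ρ : Λ²g → gl(V)` as a skew-symmetric bilinear map into endomorphisms. -/
def IsRepMap (K : Type*) {G V : Type*} [Field K] [AddCommGroup G] [Module K G]
    [AddCommGroup V] [Module K V] (ρ : G → G → Module.End K V) : Prop :=
  (∀ y, IsLinearMap K (fun x => ρ x y)) ∧ (∀ x, IsLinearMap K (fun y => ρ x y)) ∧
  (∀ x y, ρ x y = - ρ y x)

/-- The representation conditions of a 3-Lie algebra. -/
def Is3LieRep {K G V : Type*} [Field K] [AddCommGroup G] [Module K G]
    [AddCommGroup V] [Module K V] (b : G → G → G → G)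
    (ρ : G → G → Module.End K V) : Prop :=
  (∀ x₁ x₂ x₃ x₄, ρ x₁ x₂ * ρ x₃ x₄ =
      ρ (b x₁ x₂ x₃) x₄ + ρ x₃ (b x₁ x₂ x₄) + ρ x₃ x₄ * ρ x₁ x₂) ∧
  (∀ x₁ x₂ x₃ x₄, ρ x₁ (b x₂ x₃ x₄) =
      ρ x₃ x₄ * ρ x₁ x₂ - ρ x₂ x₄ * ρ x₁ x₃ + ρ x₂ x₃ * ρ x₁ x₄)

/-- The two mixed compatibility identities of a representation of a compatible
3-Lie algebra. -/
def CompatRep {K G V : Type*} [Field K] [AddCommGroup G] [Module K G]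
    [AddCommGroup V] [Module K V] (b₁ b₂ : G → G → G → G)
    (ρ μ : G → G → Module.End K V) : Prop :=
  (∀ x₁ x₂ x₃ x₄,
    ρ (b₂ x₁ x₂ x₃) x₄ + μ (b₁ x₁ x₂ x₃) x₄ + ρ x₃ (b₂ x₁ x₂ x₄) + μ x₃ (b₁ x₁ x₂ x₄)
      = (ρ x₁ x₂ * μ x₃ x₄ - μ x₃ x₄ * ρ x₁ x₂)
        - (ρ x₃ x₄ * μ x₁ x₂ - μ x₁ x₂ * ρ x₃ x₄)) ∧
  (∀ x₁ x₂ x₃ x₄,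
    ρ (b₂ x₁ x₂ x₃) x₄ + μ (b₁ x₁ x₂ x₃) x₄ - ρ x₃ x₁ * μ x₂ x₄ - μ x₃ x₁ * ρ x₂ x₄
      = ρ x₁ x₂ * μ x₃ x₄ + μ x₁ x₂ * ρ x₃ x₄ + ρ x₂ x₃ * μ x₁ x₄ + μ x₂ x₃ * ρ x₁ x₄)

/-- The semidirect product bracket on `g ⊕ V`. -/
def sdBracket {K G V : Type*} [Field K] [AddCommGroup G] [Module K G]
    [AddCommGroup V] [Module K V] (b : G → G → G → G)
    (ρ : G → G → Module.End K V) : G × V → G × V → G × V → G × V :=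
  fun p q r => (b p.1 q.1 r.1, ρ p.1 q.1 r.2 + ρ q.1 r.1 p.2 + ρ r.1 p.1 q.2)

/-- The 2-cocycle expression of a 2-cochain `w` with coefficients in a
representation `ρ` of the 3-Lie algebra `(g,b)`. -/
def CocycleExpr {K G V : Type*} [Field K] [AddCommGroup G] [Module K G]
    [AddCommGroup V] [Module K V] (b : G → G → G → G)
    (ρ : G → G → Module.End K V) (w : G → G → G → V) (x₁ x₂ x₃ x₄ x₅ : G) : V :=
  w x₁ x₂ (b x₃ x₄ x₅) - w (b x₁ x₂ x₃) x₄ x₅ - w x₃ (b x₁ x₂ x₄) x₅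
    - w x₃ x₄ (b x₁ x₂ x₅)
  + ρ x₁ x₂ (w x₃ x₄ x₅) - ρ x₃ x₄ (w x₁ x₂ x₅) - ρ x₄ x₅ (w x₁ x₂ x₃)
    - ρ x₅ x₃ (w x₁ x₂ x₄)

/-- The bracket on `g ⊕ V` twisted by a 2-cochain `w`. -/
def extBracket {K G V : Type*} [Field K] [AddCommGroup G] [Module K G]
    [AddCommGroup V] [Module K V] (b : G → G → G → G)
    (ρ : G → G → Module.End K V) (w : G → G → G → V) :
    G × V → G × V → G × V → G × V :=
  fun p q r => (b p.1 q.1 r.1,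
    ρ p.1 q.1 r.2 + ρ q.1 r.1 p.2 + ρ r.1 p.1 q.2 + w p.1 q.1 r.1)

end Defs

/-
An isomorphism of abelian extensions fixing `V` and inducing the identity on `g` is forced to be a
shear `(x, u) ↦ (x, u + τ x)` with `τ : g → V` linear. Comparing the `V`-components of the two
brackets on triples `(x, 0), (y, 0), (z, 0)` shows that such a shear intertwines the brackets twisted
by `ω` and `ω'` exactly when `ω - ω'` is the coboundary of `τ`; on general triples the terms
involving the `V`-components then cancel.
-/

section AbelianExtension

variable {K G V : Type*} [Field K] [AddCommGroup G] [Module K G] [AddCommGroup V] [Module K V]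

def triCoboundary (c : G → G → G → G) (σ : G → G → Module.End K V) (τ : G →ₗ[K] V)
    (x y z : G) : V :=
  σ x y (τ z) + σ y z (τ x) + σ z x (τ y) - τ (c x y z)

def shearEquiv (τ : G →ₗ[K] V) : (G × V) ≃ₗ[K] (G × V) :=
  (LinearEquiv.refl K G).skewProd (LinearEquiv.refl K V) τ

@[simp]
theorem shearEquiv_apply (τ : G →ₗ[K] V) (p : G × V) : shearEquiv τ p = (p.1, p.2 + τ p.1) :=
  rfl

theorem exists_eq_shearEquiv (θ : (G × V) ≃ₗ[K] (G × V)) (hV : ∀ u : V, θ (0, u) = (0, u))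
    (hG : ∀ q : G × V, (θ q).1 = q.1) : ∃ τ : G →ₗ[K] V, θ = shearEquiv τ := by
  refine ⟨LinearMap.snd K G V ∘ₗ θ.toLinearMap ∘ₗ LinearMap.inl K G V, ?_⟩
  ext ⟨x, u⟩ : 1
  have hsplit : ((x, u) : G × V) = (x, 0) + (0, u) := by simp
  rw [hsplit, map_add, hV]
  ext
  · simp [hG]
  · simp [add_comm]

theorem shearEquiv_map_extBracket_iff (c : G → G → G → G) (σ : G → G → Module.End K V)
    (w w' : G → G → G → V) (τ : G →ₗ[K] V) :
    (∀ q r s : G × V, shearEquiv τ (extBracket c σ w q r s) =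
        extBracket c σ w' (shearEquiv τ q) (shearEquiv τ r) (shearEquiv τ s)) ↔
      ∀ x y z : G, w x y z - w' x y z = triCoboundary c σ τ x y z := by
  constructor
  · intro h x y z
    have h_snd := congrArg Prod.snd (h (x, 0) (y, 0) (z, 0))
    simp only [shearEquiv_apply, extBracket, map_zero, zero_add] at h_snd
    rw [triCoboundary, sub_eq_sub_iff_add_eq_add, h_snd]
  · intro h q r s
    have hw : w q.1 r.1 s.1 = w' q.1 r.1 s.1 + triCoboundary c σ τ q.1 r.1 s.1 := by
      rw [← h]; abel
    ext
    · rfl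
    · simp only [shearEquiv_apply, extBracket, map_add, hw, triCoboundary]
      abel

end AbelianExtension

theorem stmt16_general {K G V : Type*} [Field K] [AddCommGroup G] [Module K G]
    [AddCommGroup V] [Module K V]
    (b₁ b₂ : G → G → G → G)
    (ρ μ : G → G → Module.End K V)
    (w₁ w₂ w₁' w₂' : G → G → G → V) :
    (∃ θ : (G × V) ≃ₗ[K] (G × V),
      (∀ u : V, θ (0, u) = (0, u)) ∧ (∀ q : G × V, (θ q).1 = q.1) ∧
      (∀ q r s : G × V,
        θ (extBracket b₁ ρ w₁ q r s) = extBracket b₁ ρ w₁' (θ q) (θ r) (θ s)) ∧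
      (∀ q r s : G × V,
        θ (extBracket b₂ μ w₂ q r s) = extBracket b₂ μ w₂' (θ q) (θ r) (θ s))) ↔
    (∃ τ : G →ₗ[K] V, ∀ x y z : G,
      (w₁ x y z - w₁' x y z =
        ρ x y (τ z) + ρ y z (τ x) + ρ z x (τ y) - τ (b₁ x y z)) ∧
      (w₂ x y z - w₂' x y z =
        μ x y (τ z) + μ y z (τ x) + μ z x (τ y) - τ (b₂ x y z))) := by
  constructor
  · rintro ⟨θ, hV, hG, hθ₁, hθ₂⟩
    obtain ⟨τ, rfl⟩ := exists_eq_shearEquiv θ hV hG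
    exact ⟨τ, fun x y z => ⟨(shearEquiv_map_extBracket_iff b₁ ρ w₁ w₁' τ).mp hθ₁ x y z,
      (shearEquiv_map_extBracket_iff b₂ μ w₂ w₂' τ).mp hθ₂ x y z⟩⟩
  · rintro ⟨τ, hτ⟩
    exact ⟨shearEquiv τ, fun u => by simp, fun q => rfl,
      (shearEquiv_map_extBracket_iff b₁ ρ w₁ w₁' τ).mpr fun x y z => (hτ x y z).1,
      (shearEquiv_map_extBracket_iff b₂ μ w₂ w₂' τ).mpr fun x y z => (hτ x y z).2⟩

theorem stmt16 {K G V : Type*} [Field K] [CharZero K] [AddCommGroup G] [Module K G]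
    [AddCommGroup V] [Module K V]
    (b₁ b₂ : G → G → G → G) (h₁ : Is3Lie K b₁) (h₂ : Is3Lie K b₂) (hc : Compat b₁ b₂)
    (ρ μ : G → G → Module.End K V) (hρ : IsRepMap K ρ) (hμ : IsRepMap K μ)
    (hrep₁ : Is3LieRep b₁ ρ) (hrep₂ : Is3LieRep b₂ μ) (hrepc : CompatRep b₁ b₂ ρ μ)
    (w₁ w₂ w₁' w₂' : G → G → G → V)
    (hco₁ : ∀ x₁ x₂ x₃ x₄ x₅ : G, CocycleExpr b₁ ρ w₁ x₁ x₂ x₃ x₄ x₅ = 0)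
    (hco₂ : ∀ x₁ x₂ x₃ x₄ x₅ : G, CocycleExpr b₂ μ w₂ x₁ x₂ x₃ x₄ x₅ = 0)
    (hco₃ : ∀ x₁ x₂ x₃ x₄ x₅ : G,
      CocycleExpr b₂ μ w₁ x₁ x₂ x₃ x₄ x₅ + CocycleExpr b₁ ρ w₂ x₁ x₂ x₃ x₄ x₅ = 0)
    (hco₁' : ∀ x₁ x₂ x₃ x₄ x₅ : G, CocycleExpr b₁ ρ w₁' x₁ x₂ x₃ x₄ x₅ = 0)
    (hco₂' : ∀ x₁ x₂ x₃ x₄ x₅ : G, CocycleExpr b₂ μ w₂' x₁ x₂ x₃ x₄ x₅ = 0)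
    (hco₃' : ∀ x₁ x₂ x₃ x₄ x₅ : G,
      CocycleExpr b₂ μ w₁' x₁ x₂ x₃ x₄ x₅ + CocycleExpr b₁ ρ w₂' x₁ x₂ x₃ x₄ x₅ = 0) :
    (∃ θ : (G × V) ≃ₗ[K] (G × V),
      (∀ u : V, θ (0, u) = (0, u)) ∧ (∀ q : G × V, (θ q).1 = q.1) ∧
      (∀ q r s : G × V,
        θ (extBracket b₁ ρ w₁ q r s) = extBracket b₁ ρ w₁' (θ q) (θ r) (θ s)) ∧
      (∀ q r s : G × V,
        θ (extBracket b₂ μ w₂ q r s) = extBracket b₂ μ w₂' (θ q) (θ r) (θ s))) ↔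
    (∃ τ : G →ₗ[K] V, ∀ x y z : G,
      (w₁ x y z - w₁' x y z =
        ρ x y (τ z) + ρ y z (τ x) + ρ z x (τ y) - τ (b₁ x y z)) ∧
      (w₂ x y z - w₂' x y z =
        μ x y (τ z) + μ y z (τ x) + μ z x (τ y) - τ (b₂ x y z))) :=
  stmt16_general b₁ b₂ ρ μ w₁ w₂ w₁' w₂'
end

section
/- Let (g,[·,·,·]) be a 3-Lie algebra with structure map π and let N: g → g be a Nijenhuis operator with deformed structure π_N (i.e., π_N(x,y,z) = [x,y,z]_N). Then (g, π, π_N) is a compatible 3-Lie algebra if and only if the trilinear map [π,N](x,y,z) := [Nx,y,z] + [x,Ny,z] + [x,y,Nz] − N[x,y,z] is itself a 3-Lie algebra structure on g. -/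
section ThreeLie

variable {G : Type*} [AddCommGroup G]

/-- The polarisation of the Fundamental Identity. -/
def jacobiator (b₁ b₂ : G → G → G → G) (x₁ x₂ x₃ x₄ x₅ : G) : G :=
  b₁ x₁ x₂ (b₂ x₃ x₄ x₅) + b₂ x₁ x₂ (b₁ x₃ x₄ x₅)
    - (b₁ (b₂ x₁ x₂ x₃) x₄ x₅ + b₂ (b₁ x₁ x₂ x₃) x₄ x₅
      + b₁ x₃ (b₂ x₁ x₂ x₄) x₅ + b₂ x₃ (b₁ x₁ x₂ x₄) x₅
      + b₁ x₃ x₄ (b₂ x₁ x₂ x₅) + b₂ x₃ x₄ (b₁ x₁ x₂ x₅))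

theorem compat_iff_jacobiator {b₁ b₂ : G → G → G → G} :
    Compat b₁ b₂ ↔ ∀ x₁ x₂ x₃ x₄ x₅, jacobiator b₁ b₂ x₁ x₂ x₃ x₄ x₅ = 0 := by
  simp only [Compat, jacobiator, sub_eq_zero]

theorem jacobiator_comm (b₁ b₂ : G → G → G → G) (x₁ x₂ x₃ x₄ x₅ : G) :
    jacobiator b₁ b₂ x₁ x₂ x₃ x₄ x₅ = jacobiator b₂ b₁ x₁ x₂ x₃ x₄ x₅ := by
  simp only [jacobiator]; abel

theorem fundIdent_iff_jacobiator (K : Type*) [Field K] [NeZero (2 : K)] [Module K G]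
    {b : G → G → G → G} :
    FundIdent b ↔ ∀ x₁ x₂ x₃ x₄ x₅, jacobiator b b x₁ x₂ x₃ x₄ x₅ = 0 := by
  have key : ∀ x₁ x₂ x₃ x₄ x₅, jacobiator b b x₁ x₂ x₃ x₄ x₅ = (2 : K) •
      (b x₁ x₂ (b x₃ x₄ x₅) -
        (b (b x₁ x₂ x₃) x₄ x₅ + b x₃ (b x₁ x₂ x₄) x₅ + b x₃ x₄ (b x₁ x₂ x₅))) := by
    intros; simp only [jacobiator]; module
  simp only [FundIdent, key, smul_eq_zero, two_ne_zero, false_or, sub_eq_zero]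

variable {K : Type*} [Field K] [Module K G]

namespace IsTrilinearMap

variable {b : G → G → G → G}

theorem map_add₁ (hb : IsTrilinearMap K b) (x x' y z : G) :
    b (x + x') y z = b x y z + b x' y z := (hb.1 y z).map_add x x'
theorem map_add₂ (hb : IsTrilinearMap K b) (x y y' z : G) :
    b x (y + y') z = b x y z + b x y' z := (hb.2.1 x z).map_add y y'
theorem map_add₃ (hb : IsTrilinearMap K b) (x y z z' : G) :
    b x y (z + z') = b x y z + b x y z' := (hb.2.2 x y).map_add z z'
theorem map_sub₁ (hb : IsTrilinearMap K b) (x x' y z : G) :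
    b (x - x') y z = b x y z - b x' y z := (hb.1 y z).map_sub x x'
theorem map_sub₂ (hb : IsTrilinearMap K b) (x y y' z : G) :
    b x (y - y') z = b x y z - b x y' z := (hb.2.1 x z).map_sub y y'
theorem map_sub₃ (hb : IsTrilinearMap K b) (x y z z' : G) :
    b x y (z - z') = b x y z - b x y z' := (hb.2.2 x y).map_sub z z'
theorem map_smul₁ (hb : IsTrilinearMap K b) (c : K) (x y z : G) :
    b (c • x) y z = c • b x y z := (hb.1 y z).map_smul c x
theorem map_smul₂ (hb : IsTrilinearMap K b) (c : K) (x y z : G) :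
    b x (c • y) z = c • b x y z := (hb.2.1 x z).map_smul c y
theorem map_smul₃ (hb : IsTrilinearMap K b) (c : K) (x y z : G) :
    b x y (c • z) = c • b x y z := (hb.2.2 x y).map_smul c z

end IsTrilinearMap

/-- `nrBracket b M` is the Nijenhuis–Richardson bracket `[π, M]` of the paper. -/
def nrBracket (b : G → G → G → G) (M : G →ₗ[K] G) : G → G → G → G :=
  fun x y z => b (M x) y z + b x (M y) z + b x y (M z) - M (b x y z)

section Brackets

variable {b : G → G → G → G}

theorem IsTrilinearMap.nrBracket (hb : IsTrilinearMap K b) (M : G →ₗ[K] G) :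
    IsTrilinearMap K (nrBracket b M) := by
  refine ⟨fun y z => ⟨fun u v => ?_, fun c u => ?_⟩, fun x z => ⟨fun u v => ?_, fun c u => ?_⟩,
    fun x y => ⟨fun u v => ?_, fun c u => ?_⟩⟩ <;>
  simp only [_root_.nrBracket, map_add, map_smul, hb.map_add₁, hb.map_add₂, hb.map_add₃,
    hb.map_smul₁, hb.map_smul₂, hb.map_smul₃] <;> module

theorem IsTrilinearMap.deformedBracket (hb : IsTrilinearMap K b) (N : G →ₗ[K] G) :
    IsTrilinearMap K (deformedBracket b N) := by
  refine ⟨fun y z => ⟨fun u v => ?_, fun c u => ?_⟩, fun x z => ⟨fun u v => ?_, fun c u => ?_⟩,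
    fun x y => ⟨fun u v => ?_, fun c u => ?_⟩⟩ <;>
  simp only [_root_.deformedBracket, map_add, map_smul, hb.map_add₁, hb.map_add₂, hb.map_add₃,
    hb.map_smul₁, hb.map_smul₂, hb.map_smul₃] <;> module

theorem IsSkewSym.nrBracket (hb : IsSkewSym b) (M : G →ₗ[K] G) :
    IsSkewSym (nrBracket b M) := by
  constructor <;> intro x y z <;> simp only [_root_.nrBracket]
  · conv_lhs => rw [hb.1 (M x), hb.1 x (M y), hb.1 x y (M z), hb.1 x y z, map_neg]
    abel
  · conv_lhs => rw [hb.2 (M x), hb.2 x (M y), hb.2 x y (M z), hb.2 x y z, map_neg]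
    abel

theorem IsSkewSym.deformedBracket (hb : IsSkewSym b) (N : G →ₗ[K] G) :
    IsSkewSym (deformedBracket b N) := by
  constructor <;> intro x y z <;> simp only [_root_.deformedBracket]
  · conv_lhs => rw [hb.1 (N x) (N y) z, hb.1 x (N y) (N z), hb.1 (N x) y (N z), hb.1 (N x) y z,
      hb.1 x (N y) z, hb.1 x y (N z), hb.1 x y z]
    simp only [map_neg]; abel
  · conv_lhs => rw [hb.2 (N x) (N y) z, hb.2 x (N y) (N z), hb.2 (N x) y (N z), hb.2 (N x) y z,
      hb.2 x (N y) z, hb.2 x y (N z), hb.2 x y z]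
    simp only [map_neg]; abel

end Brackets

section Jacobiator

variable {b b₁ b₂ : G → G → G → G}

theorem jacobiator_nrBracket_add_jacobiator_nrBracket (hb₁ : IsTrilinearMap K b₁)
    (hb₂ : IsTrilinearMap K b₂) (M : G →ₗ[K] G) (x₁ x₂ x₃ x₄ x₅ : G) :
    jacobiator (nrBracket b₁ M) b₂ x₁ x₂ x₃ x₄ x₅ + jacobiator b₁ (nrBracket b₂ M) x₁ x₂ x₃ x₄ x₅ =
      jacobiator b₁ b₂ (M x₁) x₂ x₃ x₄ x₅ + jacobiator b₁ b₂ x₁ (M x₂) x₃ x₄ x₅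
        + jacobiator b₁ b₂ x₁ x₂ (M x₃) x₄ x₅ + jacobiator b₁ b₂ x₁ x₂ x₃ (M x₄) x₅
        + jacobiator b₁ b₂ x₁ x₂ x₃ x₄ (M x₅) - M (jacobiator b₁ b₂ x₁ x₂ x₃ x₄ x₅) := by
  simp only [jacobiator, nrBracket, map_add, map_sub, hb₁.map_add₁, hb₁.map_add₂, hb₁.map_add₃,
    hb₁.map_sub₁, hb₁.map_sub₂, hb₁.map_sub₃, hb₂.map_add₁, hb₂.map_add₂, hb₂.map_add₃,
    hb₂.map_sub₁, hb₂.map_sub₂, hb₂.map_sub₃]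
  abel

theorem jacobiator_sub_right (hb : IsTrilinearMap K b) (x₁ x₂ x₃ x₄ x₅ : G) :
    jacobiator b (b₁ - b₂) x₁ x₂ x₃ x₄ x₅ =
      jacobiator b b₁ x₁ x₂ x₃ x₄ x₅ - jacobiator b b₂ x₁ x₂ x₃ x₄ x₅ := by
  simp only [jacobiator, Pi.sub_apply, hb.map_sub₁, hb.map_sub₂, hb.map_sub₃]
  abel

theorem jacobiator_smul_right (hb : IsTrilinearMap K b) (c : K) (x₁ x₂ x₃ x₄ x₅ : G) :
    jacobiator b (c • b₁) x₁ x₂ x₃ x₄ x₅ = c • jacobiator b b₁ x₁ x₂ x₃ x₄ x₅ := by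
  simp only [jacobiator, Pi.smul_apply, hb.map_smul₁, hb.map_smul₂, hb.map_smul₃]
  module

theorem jacobiator_add_smul_add_smul {b₀ : G → G → G → G} (hb₀ : IsTrilinearMap K b₀)
    (hb₁ : IsTrilinearMap K b₁) (hb₂ : IsTrilinearMap K b₂) (c : K) (x₁ x₂ x₃ x₄ x₅ : G) :
    jacobiator (b₀ + c • b₁ + c ^ 2 • b₂) (b₀ + c • b₁ + c ^ 2 • b₂) x₁ x₂ x₃ x₄ x₅ =
      jacobiator b₀ b₀ x₁ x₂ x₃ x₄ x₅
      + c • (jacobiator b₀ b₁ x₁ x₂ x₃ x₄ x₅ + jacobiator b₁ b₀ x₁ x₂ x₃ x₄ x₅)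
      + c ^ 2 • (jacobiator b₁ b₁ x₁ x₂ x₃ x₄ x₅ + jacobiator b₀ b₂ x₁ x₂ x₃ x₄ x₅
        + jacobiator b₂ b₀ x₁ x₂ x₃ x₄ x₅)
      + c ^ 3 • (jacobiator b₁ b₂ x₁ x₂ x₃ x₄ x₅ + jacobiator b₂ b₁ x₁ x₂ x₃ x₄ x₅)
      + c ^ 4 • jacobiator b₂ b₂ x₁ x₂ x₃ x₄ x₅ := by
  simp only [jacobiator, Pi.add_apply, Pi.smul_apply, hb₀.map_add₁, hb₀.map_add₂, hb₀.map_add₃,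
    hb₀.map_smul₁, hb₀.map_smul₂, hb₀.map_smul₃, hb₁.map_add₁, hb₁.map_add₂, hb₁.map_add₃,
    hb₁.map_smul₁, hb₁.map_smul₂, hb₁.map_smul₃, hb₂.map_add₁, hb₂.map_add₂, hb₂.map_add₃,
    hb₂.map_smul₁, hb₂.map_smul₂, hb₂.map_smul₃, smul_add]
  module

end Jacobiator

section Deformation

variable {b : G → G → G → G}

theorem two_smul_deformedBracket (N : G →ₗ[K] G) :
    (2 : K) • deformedBracket b N = nrBracket (nrBracket b N) N - nrBracket b (N * N) := by
  funext x y z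
  simp only [Pi.smul_apply, Pi.sub_apply, deformedBracket, nrBracket, Module.End.mul_apply,
    map_add, map_sub]
  module

theorem deformedBracket_add_smul_one (hb : IsTrilinearMap K b) (N : G →ₗ[K] G) (c : K) :
    deformedBracket b (N + c • 1) = deformedBracket b N + c • nrBracket b N + c ^ 2 • b := by
  funext x y z
  simp only [Pi.add_apply, Pi.smul_apply, deformedBracket, nrBracket, LinearMap.add_apply,
    LinearMap.smul_apply, Module.End.one_apply, map_add, map_smul, hb.map_add₁, hb.map_add₂,
    hb.map_add₃, hb.map_smul₁, hb.map_smul₂, hb.map_smul₃]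
  module

theorem isNijenhuis_iff {N : G →ₗ[K] G} :
    IsNijenhuis b N ↔ ∀ x y z, b (N x) (N y) (N z) = N (deformedBracket b N x y z) :=
  Iff.rfl

theorem IsNijenhuis.add_smul_one {N : G →ₗ[K] G} (hN : IsNijenhuis b N)
    (hb : IsTrilinearMap K b) (c : K) : IsNijenhuis b (N + c • 1) := by
  refine isNijenhuis_iff.mpr fun x y z => ?_
  rw [deformedBracket_add_smul_one hb]
  simp only [Pi.add_apply, Pi.smul_apply, LinearMap.add_apply, LinearMap.smul_apply,
    Module.End.one_apply, map_add, map_smul, hb.map_add₁, hb.map_add₂, hb.map_add₃,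
    hb.map_smul₁, hb.map_smul₂, hb.map_smul₃, isNijenhuis_iff.mp hN]
  simp only [deformedBracket, nrBracket, map_add, map_sub]
  module

theorem IsNijenhuis.map_jacobiator {N : G →ₗ[K] G} (hN : IsNijenhuis b N) (x₁ x₂ x₃ x₄ x₅ : G) :
    N (jacobiator (deformedBracket b N) (deformedBracket b N) x₁ x₂ x₃ x₄ x₅) =
      jacobiator b b (N x₁) (N x₂) (N x₃) (N x₄) (N x₅) := by
  simp only [jacobiator, map_add, map_sub, ← isNijenhuis_iff.mp hN]

end Deformation

section FundamentalIdentity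

variable [NeZero (2 : K)] {b : G → G → G → G}

theorem jacobiator_nrBracket_left_eq_zero (hb : IsTrilinearMap K b) (hfi : FundIdent b)
    (M : G →ₗ[K] G) (x₁ x₂ x₃ x₄ x₅ : G) :
    jacobiator (nrBracket b M) b x₁ x₂ x₃ x₄ x₅ = 0 := by
  have hJ := (fundIdent_iff_jacobiator K).mp hfi
  have h := jacobiator_nrBracket_add_jacobiator_nrBracket hb hb M x₁ x₂ x₃ x₄ x₅
  rw [jacobiator_comm b, hJ, hJ, hJ, hJ, hJ, hJ, map_zero] at h
  have h2 : (2 : K) • jacobiator (nrBracket b M) b x₁ x₂ x₃ x₄ x₅ = 0 := by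
    rw [two_smul]; simpa using h
  exact (smul_eq_zero.mp h2).resolve_left two_ne_zero

theorem jacobiator_nrBracket_nrBracket (hb : IsTrilinearMap K b) (hfi : FundIdent b)
    (N : G →ₗ[K] G) (x₁ x₂ x₃ x₄ x₅ : G) :
    jacobiator (nrBracket b N) (nrBracket b N) x₁ x₂ x₃ x₄ x₅ =
      -((2 : K) • jacobiator b (deformedBracket b N) x₁ x₂ x₃ x₄ x₅) := by
  have hδ := jacobiator_nrBracket_add_jacobiator_nrBracket (hb.nrBracket N) hb N x₁ x₂ x₃ x₄ x₅
  simp only [jacobiator_nrBracket_left_eq_zero hb hfi, map_zero, add_zero, sub_zero] at hδ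
  rw [← jacobiator_smul_right hb, two_smul_deformedBracket, jacobiator_sub_right hb,
    jacobiator_comm b, jacobiator_comm b, jacobiator_nrBracket_left_eq_zero hb hfi]
  linear_combination (norm := abel) hδ

theorem compat_deformedBracket_iff_fundIdent_nrBracket (hb : IsTrilinearMap K b)
    (hfi : FundIdent b) (N : G →ₗ[K] G) :
    Compat b (deformedBracket b N) ↔ FundIdent (nrBracket b N) := by
  simp only [compat_iff_jacobiator, fundIdent_iff_jacobiator K,
    jacobiator_nrBracket_nrBracket hb hfi, neg_eq_zero, smul_eq_zero, two_ne_zero, false_or]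

theorem eq_zero_of_forall_add_smul_one_apply_add_smul_eq_zero (N : G →ₗ[K] G)
    {u v : G} (h : ∀ c : K, (N + c • 1) (u + c • v) = 0) : u = 0 := by
  have h₀ := h 0
  have h₁ := h 1
  have hneg := h (-1)
  simp only [zero_smul, add_zero, one_smul, neg_smul, ← sub_eq_add_neg, LinearMap.add_apply,
    LinearMap.sub_apply, Module.End.one_apply, map_add, map_sub] at h₀ h₁ hneg
  have hv : (2 : K) • v = 0 := by
    linear_combination (norm := module) h₁ + hneg - (2 : K) • h₀
  rw [(smul_eq_zero.mp hv).resolve_left two_ne_zero, map_zero] at h₁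
  simpa [h₀] using h₁

theorem IsNijenhuis.fundIdent_deformedBracket {N : G →ₗ[K] G} (hN : IsNijenhuis b N)
    (hb : IsTrilinearMap K b) (hfi : FundIdent b) :
    FundIdent (deformedBracket b N) := by
  have hJ := (fundIdent_iff_jacobiator K).mp hfi
  refine (fundIdent_iff_jacobiator K).mpr fun x₁ x₂ x₃ x₄ x₅ => ?_
  refine eq_zero_of_forall_add_smul_one_apply_add_smul_eq_zero N
    (v := jacobiator (deformedBracket b N) (nrBracket b N) x₁ x₂ x₃ x₄ x₅
      + jacobiator (nrBracket b N) (deformedBracket b N) x₁ x₂ x₃ x₄ x₅) fun c => ?_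
  have hom := (hN.add_smul_one hb c).map_jacobiator x₁ x₂ x₃ x₄ x₅
  -- the coefficients of `c ^ 2`, `c ^ 3` and `c ^ 4` vanish because `b` is 3-Lie
  rw [hJ, deformedBracket_add_smul_one hb,
    jacobiator_add_smul_add_smul (hb.deformedBracket N) (hb.nrBracket N) hb,
    jacobiator_nrBracket_nrBracket hb hfi, jacobiator_comm (deformedBracket b N) b,
    jacobiator_comm b (nrBracket b N), jacobiator_nrBracket_left_eq_zero hb hfi, hJ] at hom
  convert hom using 2
  module

end FundamentalIdentity

end ThreeLie

theorem stmt17 {K G : Type*} [Field K] [CharZero K] [AddCommGroup G] [Module K G]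
    (b : G → G → G → G) (h : Is3Lie K b) (N : G →ₗ[K] G) (hN : IsNijenhuis b N) :
    (Is3Lie K b ∧ Is3Lie K (deformedBracket b N) ∧ Compat b (deformedBracket b N)) ↔
    Is3Lie K (fun x y z => b (N x) y z + b x (N y) z + b x y (N z) - N (b x y z)) := by
  obtain ⟨hb, hskew, hfi⟩ := h
  have hcompat := compat_deformedBracket_iff_fundIdent_nrBracket hb hfi N
  constructor
  · rintro ⟨-, -, hc⟩
    exact ⟨hb.nrBracket N, hskew.nrBracket N, hcompat.mp hc⟩
  · rintro ⟨-, -, hfiN⟩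
    exact ⟨⟨hb, hskew, hfi⟩,
      ⟨hb.deformedBracket N, hskew.deformedBracket N, hN.fundIdent_deformedBracket hb hfi⟩,
      hcompat.mpr hfiN⟩
end
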